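/- arXiv:1609.03964 — 5 statements merged into one kernel-verified Lean document; each statement's English description precedes it below -/
import Mathlib

section
/- For s ≤ n < 2s, T(n, m, s, k) = (n − s + 1)^k · T(s, m, s, k); equivalently, T(n,m,s,k) = (n−s+1)^k · C(m − (s−1)k, k). -/
/-- The set of cells covered by an `s×s` square whose corner is at `p`. -/
def squareCells (s : ℕ) (p : ℕ × ℕ) : Finset (ℕ × ℕ) :=
  Finset.Ico p.1 (p.1 + s) ×ˢ Finset.Ico p.2 (p.2 + s)

/-- `T n m s k`: the number of ways to place `k` pairwise non-overlapping axis-aligned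
`s×s` squares at integer positions inside an `n×m` rectangle (the remaining cells
being covered by `1×1` squares). -/
noncomputable def T (n m s k : ℕ) : ℕ :=
  Set.ncard {S : Finset (ℕ × ℕ) |
    S.card = k ∧
    (∀ p ∈ S, p.1 + s ≤ n ∧ p.2 + s ≤ m) ∧
    (S : Set (ℕ × ℕ)).Pairwise fun p q => Disjoint (squareCells s p) (squareCells s q)}

/-- `Ttot n m s`: total number of tilings of the `n×m` rectangle by `1×1` and `s×s`
squares (summing over all possible numbers of `s×s` squares). -/
noncomputable def Ttot (n m s : ℕ) : ℕ := ∑ k ∈ Finset.range (n * m + 1), T n m s k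


/-!
Since `n < 2 * s`, the row ranges of any two `s × s` squares in the rectangle meet, so two
squares are disjoint exactly when their column ranges are. Classifying packings of `k + 1`
squares by whether some square touches the right edge gives
`T n m s (k + 1) = T n (m - 1) s (k + 1) + (n - s + 1) * T n (m - s) s k`: a square at the
right edge has `n - s + 1` possible rows and forces all others into the first `m - s` columns.
The binomial formula satisfies the same recurrence, by Pascal's rule.
-/

def packings (n m s k : ℕ) : Set (Finset (ℕ × ℕ)) :=
  {S : Finset (ℕ × ℕ) |
    S.card = k ∧
    (∀ p ∈ S, p.1 + s ≤ n ∧ p.2 + s ≤ m) ∧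
    (S : Set (ℕ × ℕ)).Pairwise fun p q => Disjoint (squareCells s p) (squareCells s q)}

lemma T_eq_ncard_packings (n m s k : ℕ) : T n m s k = (packings n m s k).ncard := rfl

lemma disjoint_squareCells_iff_of_lt_two_mul {n s : ℕ} (hn : n < 2 * s) {p q : ℕ × ℕ}
    (hp : p.1 + s ≤ n) (hq : q.1 + s ≤ n) :
    Disjoint (squareCells s p) (squareCells s q) ↔ p.2 + s ≤ q.2 ∨ q.2 + s ≤ p.2 := by
  rw [squareCells, squareCells, Finset.disjoint_product, ← Finset.disjoint_coe,
    ← Finset.disjoint_coe]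
  simp only [Finset.coe_Ico, Set.Ico_disjoint_Ico]
  omega

namespace packings

variable {n m s k : ℕ}

lemma finite (n m s k : ℕ) : (packings n m s k).Finite := by
  refine (Finset.finite_toSet (Finset.range (n + 1) ×ˢ Finset.range (m + 1)).powerset).subset ?_
  intro S ⟨_, hbound, _⟩
  simp only [Finset.coe_powerset, Set.mem_preimage, Set.mem_powerset_iff, Finset.coe_subset]
  intro p hp
  have := hbound p hp
  simp only [Finset.mem_product, Finset.mem_range]
  omega

lemma zero_eq (n m s : ℕ) : packings n m s 0 = {∅} := by
  ext S
  simp only [packings, Set.mem_ofPred_eq, Set.mem_singleton_iff, Finset.card_eq_zero]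
  constructor
  · exact fun h => h.1
  · rintro rfl
    simp

lemma succ_eq_empty_of_lt (hm : m < s) : packings n m s (k + 1) = ∅ := by
  refine Set.eq_empty_of_forall_notMem fun S ⟨hcard, hbound, _⟩ => ?_
  obtain ⟨p, hp⟩ := Finset.card_pos.mp (by omega : 0 < S.card)
  have := (hbound p hp).2
  omega

lemma inter_eq_pred (hm : 0 < m) :
    packings n m s k ∩ {S | ∀ p ∈ S, p.2 + s < m} = packings n (m - 1) s k := by
  ext S
  simp only [packings, Set.mem_inter_iff, Set.mem_ofPred_eq]
  constructor
  · rintro ⟨⟨hcard, hbound, hpw⟩, hlt⟩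
    exact ⟨hcard, fun p hp => ⟨(hbound p hp).1, by have := hlt p hp; omega⟩, hpw⟩
  · rintro ⟨hcard, hbound, hpw⟩
    exact ⟨⟨hcard, fun p hp => by have := hbound p hp; omega, hpw⟩,
      fun p hp => by have := hbound p hp; omega⟩

lemma mk_notMem (hs : 0 < s) (r : ℕ) {S : Finset (ℕ × ℕ)} (hS : S ∈ packings n (m - s) s k) :
    (r, m - s) ∉ S := fun h => by
  have := (hS.2.1 _ h).2
  omega

lemma insert_mem (hn : n < 2 * s) (hm : s ≤ m) {r : ℕ} (hr : r + s ≤ n)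
    {S : Finset (ℕ × ℕ)} (hS : S ∈ packings n (m - s) s k) :
    insert (r, m - s) S ∈ packings n m s (k + 1) := by
  obtain ⟨hcard, hbound, hpw⟩ := hS
  refine ⟨?_, ?_, ?_⟩
  · rw [Finset.card_insert_of_notMem (mk_notMem (by omega) r ⟨hcard, hbound, hpw⟩), hcard]
  · intro p hp
    rcases Finset.mem_insert.mp hp with rfl | hp
    · exact ⟨hr, by simp only; omega⟩
    · have := hbound p hp
      omega
  · rw [Finset.coe_insert]
    refine Set.pairwise_insert.mpr ⟨hpw, fun q hq _ => ?_⟩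
    have := hbound q hq
    rw [disjoint_squareCells_iff_of_lt_two_mul hn hr this.1,
      disjoint_squareCells_iff_of_lt_two_mul hn this.1 hr]
    omega

lemma erase_mem (hn : n < 2 * s) {S : Finset (ℕ × ℕ)} (hS : S ∈ packings n m s (k + 1))
    {p : ℕ × ℕ} (hp : p ∈ S) (hpm : p.2 + s = m) : S.erase p ∈ packings n (m - s) s k := by
  obtain ⟨hcard, hbound, hpw⟩ := hS
  refine ⟨by rw [Finset.card_erase_of_mem hp, hcard]; rfl, fun q hq => ?_,
    hpw.mono (Finset.coe_subset.mpr (Finset.erase_subset _ _))⟩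
  have hqS := Finset.mem_of_mem_erase hq
  have hdisj : Disjoint (squareCells s q) (squareCells s p) :=
    hpw hqS hp (Finset.ne_of_mem_erase hq)
  rw [disjoint_squareCells_iff_of_lt_two_mul hn (hbound q hqS).1 (hbound p hp).1] at hdisj
  have := hbound q hqS
  omega

lemma sdiff_eq_image (h1 : s ≤ n) (h2 : n < 2 * s) (hm : s ≤ m) :
    packings n m s (k + 1) \ {S | ∀ p ∈ S, p.2 + s < m} =
      (fun rS : ℕ × Finset (ℕ × ℕ) => insert (rS.1, m - s) rS.2) ''
        (Set.Iio (n - s + 1) ×ˢ packings n (m - s) s k) := by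
  ext S
  simp only [Set.mem_sdiff, Set.mem_ofPred_eq, not_forall, not_lt, Set.mem_image, Set.mem_prod,
    Set.mem_Iio]
  constructor
  · rintro ⟨hS, p, hp, hpm⟩
    have hbound := hS.2.1 p hp
    refine ⟨(p.1, S.erase p), ⟨by omega, erase_mem h2 hS hp (by omega)⟩, ?_⟩
    rw [show (p.1, m - s) = p by ext <;> simp only; omega, Finset.insert_erase hp]
  · rintro ⟨⟨r, S'⟩, ⟨hr, hS'⟩, rfl⟩
    exact ⟨insert_mem h2 hm (by omega) hS', (r, m - s), Finset.mem_insert_self _ _,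
      by simp only; omega⟩

lemma injOn_insert (hs : 0 < s) :
    Set.InjOn (fun rS : ℕ × Finset (ℕ × ℕ) => insert (rS.1, m - s) rS.2)
      (Set.Iio (n - s + 1) ×ˢ packings n (m - s) s k) := by
  rintro ⟨r₁, S₁⟩ ⟨-, hS₁⟩ ⟨r₂, S₂⟩ ⟨-, hS₂⟩ heq
  dsimp only at hS₁ hS₂ heq
  have hr : r₁ = r₂ := by
    have hmem : (r₁, m - s) ∈ insert (r₂, m - s) S₂ := heq ▸ Finset.mem_insert_self _ _
    rcases Finset.mem_insert.mp hmem with h | h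
    · exact congrArg Prod.fst h
    · exact absurd h (mk_notMem hs r₁ hS₂)
  subst hr
  congr 1
  rw [← Finset.erase_insert (mk_notMem hs r₁ hS₁), heq, Finset.erase_insert (mk_notMem hs r₁ hS₂)]

end packings

lemma T_zero (n m s : ℕ) : T n m s 0 = 1 := by
  rw [T_eq_ncard_packings, packings.zero_eq, Set.ncard_singleton]

lemma T_succ_of_lt {n m s : ℕ} (k : ℕ) (hm : m < s) : T n m s (k + 1) = 0 := by
  rw [T_eq_ncard_packings, packings.succ_eq_empty_of_lt hm, Set.ncard_empty]

lemma T_succ {n m s : ℕ} (k : ℕ) (h1 : s ≤ n) (h2 : n < 2 * s) (hm : s ≤ m) :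
    T n m s (k + 1) = T n (m - 1) s (k + 1) + (n - s + 1) * T n (m - s) s k := by
  rw [T_eq_ncard_packings, ← Set.ncard_inter_add_ncard_sdiff_eq_ncard _ {S | ∀ p ∈ S, p.2 + s < m}
    (packings.finite n m s (k + 1)), packings.inter_eq_pred (by omega),
    packings.sdiff_eq_image h1 h2 hm, (packings.injOn_insert (by omega)).ncard_image,
    Set.ncard_prod, Set.ncard_Iio_nat, T_eq_ncard_packings, T_eq_ncard_packings]

lemma choose_sub_mul_succ {m s : ℕ} (k : ℕ) (hs : 0 < s) (hm : s ≤ m) :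
    (m - (s - 1) * (k + 1)).choose (k + 1) =
      (m - 1 - (s - 1) * (k + 1)).choose (k + 1) + (m - s - (s - 1) * k).choose k := by
  have hmul : (s - 1) * (k + 1) = (s - 1) * k + (s - 1) := by ring
  rw [hmul, show m - 1 - ((s - 1) * k + (s - 1)) = m - s - (s - 1) * k by omega]
  rcases le_or_gt (s + (s - 1) * k) m with hle | hlt
  · rw [show m - ((s - 1) * k + (s - 1)) = m - s - (s - 1) * k + 1 by omega,
      Nat.choose_succ_succ', add_comm]
  · have hk : k ≠ 0 := by
      rintro rfl
      omega
    rw [show m - ((s - 1) * k + (s - 1)) = 0 by omega, show m - s - (s - 1) * k = 0 by omega,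
      Nat.choose_zero_succ, Nat.choose_eq_zero_of_lt (Nat.pos_of_ne_zero hk)]

lemma T_eq_pow_mul_choose {n s : ℕ} (h1 : s ≤ n) (h2 : n < 2 * s) (m k : ℕ) :
    T n m s k = (n - s + 1) ^ k * (m - (s - 1) * k).choose k := by
  induction m using Nat.strong_induction_on generalizing k with
  | _ m ih =>
    rcases k with _ | k
    · simp [T_zero]
    rcases lt_or_ge m s with hm | hm
    · have : s - 1 ≤ (s - 1) * (k + 1) := Nat.le_mul_of_pos_right _ k.succ_pos
      rw [T_succ_of_lt k hm, Nat.choose_eq_zero_of_lt (by omega), mul_zero]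
    · rw [T_succ k h1 h2 hm, ih (m - 1) (by omega), ih (m - s) (by omega),
        choose_sub_mul_succ k (by omega) hm]
      ring

theorem stmt_7_general (n m s k : ℕ) (h1 : s ≤ n) (h2 : n < 2 * s) :
    T n m s k = (n - s + 1) ^ k * T s m s k ∧
    T n m s k = (n - s + 1) ^ k * Nat.choose (m - (s - 1) * k) k := by
  have hn := T_eq_pow_mul_choose h1 h2 m k
  have hs := T_eq_pow_mul_choose (le_refl s) (by omega) m k
  rw [Nat.sub_self, zero_add, one_pow, one_mul] at hs
  exact ⟨hn.trans (by rw [hs]), hn⟩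

theorem stmt_7 (n m s k : ℕ) (hs : 0 < s) (h1 : s ≤ n) (h2 : n < 2 * s)
    (hm : 0 < m) :
    T n m s k = (n - s + 1) ^ k * T s m s k ∧
    T n m s k = (n - s + 1) ^ k * Nat.choose (m - (s - 1) * k) k :=
  stmt_7_general n m s k h1 h2
end

section
/- For k ≥ 0 and m ≥ 0, T(3, m, 2, k) = 2^k · C(m − k, k); i.e., the number of ways to place k non-overlapping 2×2 squares in a 3×m rectangle is 2^k times a binomial coefficient. -/
def placements (n m s k : ℕ) : Set (Finset (ℕ × ℕ)) :=
  {S | S.card = k ∧ (∀ p ∈ S, p.1 + s ≤ n ∧ p.2 + s ≤ m) ∧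
    (S : Set (ℕ × ℕ)).Pairwise fun p q => Disjoint (squareCells s p) (squareCells s q)}

theorem T_eq_ncard_placements (n m s k : ℕ) : T n m s k = (placements n m s k).ncard := rfl

section SquareCells

variable {s : ℕ} {p q : ℕ × ℕ}

theorem disjoint_squareCells_of_snd_add_le (h : p.2 + s ≤ q.2) :
    Disjoint (squareCells s p) (squareCells s q) := by
  rw [Finset.disjoint_left]
  intro a hp hq
  simp only [squareCells, Finset.mem_product, Finset.mem_Ico] at hp hq
  omega

theorem not_disjoint_squareCells (h₁ : p.1 < q.1 + s) (h₂ : q.1 < p.1 + s)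
    (h₃ : p.2 < q.2 + s) (h₄ : q.2 < p.2 + s) :
    ¬ Disjoint (squareCells s p) (squareCells s q) := by
  rw [Finset.not_disjoint_iff]
  exact ⟨(max p.1 q.1, max p.2 q.2), by simp [squareCells]; omega, by simp [squareCells]; omega⟩

end SquareCells

section Placements

variable {n m s k : ℕ} {S : Finset (ℕ × ℕ)}

theorem placements_finite (n m s k : ℕ) : (placements n m s k).Finite := by
  refine (Finset.range (n + 1) ×ˢ Finset.range (m + 1)).powerset.finite_toSet.subset ?_
  intro S hS
  rw [Finset.mem_coe, Finset.mem_powerset]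
  intro p hp
  have := hS.2.1 p hp
  rw [Finset.mem_product, Finset.mem_range, Finset.mem_range]
  omega

theorem placements_zero (n m s : ℕ) : placements n m s 0 = {∅} := by
  ext S
  simp only [placements, Set.mem_ofPred_eq, Set.mem_singleton_iff, Finset.card_eq_zero]
  constructor
  · exact And.left
  · rintro rfl
    simp

theorem placements_eq_empty_of_lt (h : m < s) (hk : k ≠ 0) : placements n m s k = ∅ := by
  refine Set.eq_empty_of_forall_notMem fun S ⟨hcard, hbound, _⟩ => ?_
  obtain ⟨p, hp⟩ := Finset.card_ne_zero.mp (hcard ▸ hk)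
  have := hbound p hp
  omega

theorem placements_mono {m' : ℕ} (h : m ≤ m') : placements n m s k ⊆ placements n m' s k :=
  fun _ ⟨hcard, hbound, hdisj⟩ =>
    ⟨hcard, fun p hp => ⟨(hbound p hp).1, (hbound p hp).2.trans h⟩, hdisj⟩

theorem mk_notMem_of_mem_placements (hs : 0 < s) (hS : S ∈ placements n m s k) (r : ℕ) :
    (r, m) ∉ S := fun h => by
  have := hS.2.1 _ h
  omega

theorem insert_mem_placements (hs : 0 < s) {r : ℕ} (hr : r + s ≤ n)
    (hS : S ∈ placements n m s k) : insert (r, m) S ∈ placements n (m + s) s (k + 1) := by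
  obtain ⟨hcard, hbound, hdisj⟩ := hS
  have hnotMem := mk_notMem_of_mem_placements hs ⟨hcard, hbound, hdisj⟩ r
  refine ⟨by rw [Finset.card_insert_of_notMem hnotMem, hcard], ?_, ?_⟩
  · simp only [Finset.mem_insert, forall_eq_or_imp]
    exact ⟨⟨hr, le_rfl⟩, fun p hp => ⟨(hbound p hp).1, by have := hbound p hp; omega⟩⟩
  · rw [Finset.coe_insert, Set.pairwise_insert]
    exact ⟨hdisj, fun q hq _ =>
      ⟨(disjoint_squareCells_of_snd_add_le (hbound q hq).2).symm,
        disjoint_squareCells_of_snd_add_le (hbound q hq).2⟩⟩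

theorem insert_injOn_placements (hs : 0 < s) (r : ℕ) :
    Set.InjOn (insert (r, m)) (placements n m s k) := fun S hS S' hS' h => by
  rw [← Finset.erase_insert (mk_notMem_of_mem_placements hs hS r),
    ← Finset.erase_insert (mk_notMem_of_mem_placements hs hS' r), h]

/-- When `n < 2 * s` any two squares share a row, so a square in the last possible column
position meets every other square that does not fit into the first `m` columns. -/
theorem erase_mem_placements (hn : n < 2 * s) (hS : S ∈ placements n (m + s) s (k + 1))
    {p : ℕ × ℕ} (hp : p ∈ S) (hpm : p.2 = m) : S.erase p ∈ placements n m s k := by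
  obtain ⟨hcard, hbound, hdisj⟩ := hS
  refine ⟨by rw [Finset.card_erase_of_mem hp, hcard, Nat.add_sub_cancel], ?_,
    hdisj.mono (Finset.coe_subset.mpr (Finset.erase_subset p S))⟩
  intro q hq
  obtain ⟨hqp, hqS⟩ := Finset.mem_erase.mp hq
  have hqb := hbound q hqS
  have hpb := hbound p hp
  refine ⟨hqb.1, ?_⟩
  by_contra hlt
  exact not_disjoint_squareCells (by omega) (by omega) (by omega) (by omega) (hdisj hqS hp hqp)

end Placements

theorem placements_three_two_add_two (m k : ℕ) :
    placements 3 (m + 2) 2 (k + 1) =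
      placements 3 (m + 1) 2 (k + 1) ∪
        (insert (0, m) '' placements 3 m 2 k ∪ insert (1, m) '' placements 3 m 2 k) := by
  refine Set.Subset.antisymm (fun S hS => ?_) <| Set.union_subset (placements_mono (by omega)) <|
    Set.union_subset (Set.image_subset_iff.mpr fun S => insert_mem_placements two_pos (by omega))
      (Set.image_subset_iff.mpr fun S => insert_mem_placements two_pos (by omega))
  by_cases hlast : ∃ p ∈ S, p.2 = m
  · obtain ⟨⟨r, _⟩, hp, rfl⟩ := hlast
    have hr : r = 0 ∨ r = 1 := by have := hS.2.1 _ hp; omega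
    have hmem := Finset.insert_erase hp ▸
      Set.mem_image_of_mem (insert _) (erase_mem_placements (by norm_num) hS hp rfl)
    rcases hr with rfl | rfl
    exacts [.inr (.inl hmem), .inr (.inr hmem)]
  · push Not at hlast
    obtain ⟨hcard, hbound, hdisj⟩ := hS
    refine .inl ⟨hcard, fun p hp => ?_, hdisj⟩
    have := hbound p hp
    have := hlast p hp
    omega

theorem ncard_placements_three_two_add_two (m k : ℕ) :
    (placements 3 (m + 2) 2 (k + 1)).ncard =
      (placements 3 (m + 1) 2 (k + 1)).ncard + 2 * (placements 3 m 2 k).ncard := by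
  have hfin := placements_finite 3 m 2 k
  have hdisj_rows : Disjoint (insert (0, m) '' placements 3 m 2 k)
      (insert (1, m) '' placements 3 m 2 k) := by
    rw [Set.disjoint_left]
    rintro _ ⟨S, hS, rfl⟩ ⟨S', hS', hSS'⟩
    have : (1, m) ∈ insert (0, m) S := hSS' ▸ Finset.mem_insert_self _ _
    exact mk_notMem_of_mem_placements two_pos hS 1 (by simpa using this)
  have hdisj_last (r : ℕ) :
      Disjoint (placements 3 (m + 1) 2 (k + 1)) (insert (r, m) '' placements 3 m 2 k) := by
    rw [Set.disjoint_left]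
    rintro _ hS ⟨S, -, rfl⟩
    have := hS.2.1 (r, m) (Finset.mem_insert_self _ _)
    omega
  rw [placements_three_two_add_two,
    Set.ncard_union_eq (Set.disjoint_union_right.mpr ⟨hdisj_last 0, hdisj_last 1⟩)
      (placements_finite ..) ((hfin.image _).union (hfin.image _)),
    Set.ncard_union_eq hdisj_rows (hfin.image _) (hfin.image _),
    (insert_injOn_placements two_pos 0).ncard_image,
    (insert_injOn_placements two_pos 1).ncard_image]
  ring

theorem choose_add_two_sub_succ (m k : ℕ) :
    (m + 2 - (k + 1)).choose (k + 1) = (m + 1 - (k + 1)).choose (k + 1) + (m - k).choose k := by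
  rcases le_or_gt k m with h | h
  · rw [show m + 2 - (k + 1) = m - k + 1 by omega, show m + 1 - (k + 1) = m - k by omega,
      Nat.choose_succ_succ, add_comm]
  · rw [show m + 2 - (k + 1) = 0 by omega, show m + 1 - (k + 1) = 0 by omega,
      show m - k = 0 by omega, Nat.choose_eq_zero_of_lt (by omega),
      Nat.choose_eq_zero_of_lt (by omega)]

theorem stmt_8 (m k : ℕ) :
    T 3 m 2 k = 2 ^ k * Nat.choose (m - k) k := by
  rw [T_eq_ncard_placements]
  induction m using Nat.twoStepInduction generalizing k with
  | zero | one =>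
    rcases k with _ | k
    · simp [placements_zero]
    · rw [placements_eq_empty_of_lt (by norm_num) k.succ_ne_zero]
      simp
  | more m ih ih_succ =>
    rcases k with _ | k
    · simp [placements_zero]
    · rw [ncard_placements_three_two_add_two, ih, ih_succ, choose_add_two_sub_succ]
      ring
end

section
/- The total number T(3,m,2) = Σ_k T(3,m,2,k) of tilings of a 3×m rectangle with 1×1 and 2×2 squares equals (2^{m+1} + (−1)^m)/3 (the Jacobsthal numbers). -/
/-!
In a strip of height `n < 2 s`, any two `s × s` squares whose columns overlap also overlap in
rows. Hence in a placement inside the `n × (m + s)` rectangle at most one square sits in the last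
possible column `m`, and all other squares then lie in the first `m` columns. Counting placements
by this square gives `a (m + s) = a (m + s - 1) + (n + 1 - s) a m`; for `n = 3`, `s = 2` this is the
Jacobsthal recurrence `a (m + 2) = a (m + 1) + 2 a m` with `a 0 = a 1 = 1`.
-/

open Finset in
theorem disjoint_squareCells_iff {s : ℕ} {p q : ℕ × ℕ} :
    Disjoint (squareCells s p) (squareCells s q) ↔
      p.1 + s ≤ q.1 ∨ q.1 + s ≤ p.1 ∨ p.2 + s ≤ q.2 ∨ q.2 + s ≤ p.2 := by
  simp only [squareCells, disjoint_left, mem_product, mem_Ico]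
  constructor
  · intro h
    by_contra! hpq
    exact h (a := (max p.1 q.1, max p.2 q.2)) (by simp; omega) (by simp; omega)
  · intro h x hp hq
    omega

def squarePlacements (n m s : ℕ) : Set (Finset (ℕ × ℕ)) :=
  {S | (∀ p ∈ S, p.1 + s ≤ n ∧ p.2 + s ≤ m) ∧
    (S : Set (ℕ × ℕ)).Pairwise fun p q => Disjoint (squareCells s p) (squareCells s q)}

section Placements

variable {n m s : ℕ}

theorem subset_of_mem_squarePlacements (hs : 0 < s) {S : Finset (ℕ × ℕ)}
    (hS : S ∈ squarePlacements n m s) : S ⊆ Finset.range n ×ˢ Finset.range m := by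
  intro p hp
  have := hS.1 p hp
  simp only [Finset.mem_product, Finset.mem_range]
  omega

theorem squarePlacements_finite (hs : 0 < s) : (squarePlacements n m s).Finite :=
  (Finset.range n ×ˢ Finset.range m).powerset.finite_toSet.subset fun _ hS =>
    Finset.mem_powerset.2 (subset_of_mem_squarePlacements hs hS)

theorem Ttot_eq_ncard_squarePlacements (hs : 0 < s) :
    Ttot n m s = (squarePlacements n m s).ncard := by
  classical
  set P := (squarePlacements_finite (n := n) (m := m) hs).toFinset
  have hcard : ∀ S ∈ P, S.card ∈ Finset.range (n * m + 1) := by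
    intro S hS
    rw [Set.Finite.mem_toFinset] at hS
    have := Finset.card_le_card (subset_of_mem_squarePlacements hs hS)
    rw [Finset.card_product, Finset.card_range, Finset.card_range] at this
    exact Finset.mem_range_succ_iff.2 this
  have hT : ∀ k, T n m s k = (P.filter (·.card = k)).card := by
    intro k
    rw [T, ← Set.ncard_coe_finset]
    congr 1
    ext S
    simp only [P, squarePlacements, Finset.coe_filter, Set.Finite.mem_toFinset, Set.mem_ofPred_eq]
    tauto
  rw [Ttot, Finset.sum_congr rfl fun k _ => hT k, ← Finset.card_eq_sum_card_fiberwise hcard,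
    ← Set.ncard_coe_finset, Set.Finite.coe_toFinset]

theorem squarePlacements_of_lt (hm : m < s) : squarePlacements n m s = {∅} := by
  ext S
  refine ⟨fun hS => ?_, ?_⟩
  · refine Finset.eq_empty_iff_forall_notMem.2 fun p hp => ?_
    have := hS.1 p hp
    omega
  · rintro rfl
    simp [squarePlacements]

theorem squarePlacements_mono {m' : ℕ} (h : m ≤ m') :
    squarePlacements n m s ⊆ squarePlacements n m' s :=
  fun _ hS => ⟨fun p hp => ⟨(hS.1 p hp).1, (hS.1 p hp).2.trans h⟩, hS.2⟩

theorem insert_mem_squarePlacements {r : ℕ} (hr : r + s ≤ n) {S : Finset (ℕ × ℕ)}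
    (hS : S ∈ squarePlacements n m s) : insert (r, m) S ∈ squarePlacements n (m + s) s := by
  refine ⟨?_, ?_⟩
  · intro p hp
    rcases Finset.mem_insert.1 hp with rfl | hp
    · exact ⟨hr, le_rfl⟩
    · have := hS.1 p hp
      omega
  · rw [Finset.coe_insert, Set.pairwise_insert]
    refine ⟨hS.2, fun q hq _ => ?_⟩
    have := (hS.1 q hq).2
    constructor <;> rw [disjoint_squareCells_iff] <;> omega

theorem erase_mem_squarePlacements (hn : n < 2 * s) {r : ℕ} {S : Finset (ℕ × ℕ)}
    (hS : S ∈ squarePlacements n (m + s) s) (hr : (r, m) ∈ S) :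
    S.erase (r, m) ∈ squarePlacements n m s := by
  refine ⟨fun q hq => ⟨(hS.1 q (Finset.mem_of_mem_erase hq)).1, ?_⟩,
    hS.2.mono (by simp)⟩
  have hdisj : Disjoint (squareCells s q) (squareCells s (r, m)) :=
    hS.2 (Finset.mem_of_mem_erase hq) hr (Finset.ne_of_mem_erase hq)
  rw [disjoint_squareCells_iff] at hdisj
  have := hS.1 q (Finset.mem_of_mem_erase hq)
  have := hS.1 _ hr
  dsimp only at *
  omega

theorem squarePlacements_add_eq_union (hn : n < 2 * s) :
    squarePlacements n (m + s) s = squarePlacements n (m + s - 1) s ∪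
      (fun x : ℕ × Finset (ℕ × ℕ) => insert (x.1, m) x.2) ''
        ((Finset.range (n + 1 - s) : Set ℕ) ×ˢ squarePlacements n m s) := by
  ext S
  refine ⟨fun hS => ?_, ?_⟩
  · by_cases h : ∃ r, (r, m) ∈ S
    · obtain ⟨r, hr⟩ := h
      have := (hS.1 _ hr).1
      refine Or.inr ⟨(r, S.erase (r, m)), ⟨?_, erase_mem_squarePlacements hn hS hr⟩,
        Finset.insert_erase hr⟩
      simp only [Finset.coe_range, Set.mem_Iio]
      omega
    · refine Or.inl ⟨fun p hp => ⟨(hS.1 p hp).1, ?_⟩, hS.2⟩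
      have := (hS.1 p hp).2
      have : p.2 ≠ m := fun hpm => h ⟨p.1, hpm ▸ hp⟩
      omega
  · rintro (hS | ⟨⟨r, S⟩, ⟨hr, hS⟩, rfl⟩)
    · exact squarePlacements_mono (by omega) hS
    · simp only [Finset.coe_range, Set.mem_Iio] at hr
      exact insert_mem_squarePlacements (by omega) hS

theorem ncard_squarePlacements_add (hn : n < 2 * s) :
    (squarePlacements n (m + s) s).ncard =
      (squarePlacements n (m + s - 1) s).ncard + (n + 1 - s) * (squarePlacements n m s).ncard := by
  have hs : 0 < s := by omega
  have hnotMem : ∀ {r m'}, m' < m + s → ∀ S ∈ squarePlacements n m' s, (r, m) ∉ S := by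
    intro r m' hm' S hS hr
    have := (hS.1 _ hr).2
    omega
  rw [squarePlacements_add_eq_union hn, Set.ncard_union_eq ?_ (squarePlacements_finite hs)
      (((Finset.finite_toSet _).prod (squarePlacements_finite hs)).image _),
    Set.InjOn.ncard_image ?_, Set.ncard_prod, Set.ncard_coe_finset, Finset.card_range]
  · rintro ⟨r, S⟩ ⟨-, hS⟩ ⟨r', S'⟩ ⟨-, hS'⟩ h
    have h : insert (r, m) S = insert (r', m) S' := h
    obtain rfl : r = r' := by
      have := Finset.mem_insert.1 (h ▸ Finset.mem_insert_self (r, m) S)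
      simp only [Prod.mk.injEq, and_true] at this
      exact this.resolve_right (hnotMem (by omega) S' hS')
    rw [Prod.mk.injEq, ← Finset.erase_insert (hnotMem (by omega) S hS),
      ← Finset.erase_insert (hnotMem (by omega) S' hS'), h]
    exact ⟨rfl, rfl⟩
  · rw [Set.disjoint_right]
    rintro _ ⟨⟨r, S⟩, -, rfl⟩ hS
    exact hnotMem (by omega) _ hS (Finset.mem_insert_self _ _)

end Placements

theorem stmt_9 (m : ℕ) :
    (Ttot 3 m 2 : ℤ) * 3 = 2 ^ (m + 1) + (-1) ^ m := by
  rw [Ttot_eq_ncard_squarePlacements two_pos]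
  induction m using Nat.twoStepInduction with
  | zero => rw [squarePlacements_of_lt two_pos]; norm_num
  | one => rw [squarePlacements_of_lt one_lt_two]; norm_num
  | more m ih₀ ih₁ =>
    rw [ncard_squarePlacements_add (by norm_num : 3 < 2 * 2), show m + 2 - 1 = m + 1 from rfl]
    push_cast
    linear_combination ih₁ + 2 * ih₀
end

section
/- For s ≤ n < 2s, the total number of tilings satisfies the recurrence T(n,m,s) = T(n,m−1,s) + (n−s+1)·T(n,m−s,s) for m ≥ s, with T(n,m,s) = 1 for 0 ≤ m < s. -/
/-- All valid placements (without fixing the number of squares). -/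
def Tile (n m s : ℕ) : Set (Finset (ℕ × ℕ)) :=
  {S | (∀ p ∈ S, p.1 + s ≤ n ∧ p.2 + s ≤ m) ∧
    (S : Set (ℕ × ℕ)).Pairwise fun p q => Disjoint (squareCells s p) (squareCells s q)}

lemma mem_sq {s : ℕ} {p x : ℕ × ℕ} :
    x ∈ squareCells s p ↔ (p.1 ≤ x.1 ∧ x.1 < p.1 + s) ∧ (p.2 ≤ x.2 ∧ x.2 < p.2 + s) := by
  simp [squareCells, Finset.mem_Ico]

lemma disj_iff {n s : ℕ} (hs : 0 < s) (h2 : n < 2 * s) {p q : ℕ × ℕ}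
    (hp : p.1 + s ≤ n) (hq : q.1 + s ≤ n) :
    Disjoint (squareCells s p) (squareCells s q) ↔ p.2 + s ≤ q.2 ∨ q.2 + s ≤ p.2 := by
  constructor
  · intro h
    by_contra hc
    push_neg at hc
    have h1 : (max p.1 q.1, max p.2 q.2) ∈ squareCells s p := mem_sq.mpr (by omega)
    have h2' : (max p.1 q.1, max p.2 q.2) ∈ squareCells s q := mem_sq.mpr (by omega)
    exact Finset.disjoint_left.mp h h1 h2'
  · intro h
    rw [Finset.disjoint_left]
    intro x hx hx'
    rw [mem_sq] at hx hx'
    omega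

lemma tile_finite {n m s : ℕ} (hs : 0 < s) : (Tile n m s).Finite := by
  apply Set.Finite.subset ((Finset.range n ×ˢ Finset.range m).powerset.finite_toSet)
  intro S hS
  rw [Finset.mem_coe, Finset.mem_powerset]
  intro p hp
  have h := hS.1 p hp
  simp only [Finset.mem_product, Finset.mem_range]
  omega

lemma card_le_tile {n m s : ℕ} (hs : 0 < s) {S : Finset (ℕ × ℕ)} (hS : S ∈ Tile n m s) :
    S.card ≤ n * m := by
  have hsub : S ⊆ Finset.range n ×ˢ Finset.range m := by
    intro p hp
    have h := hS.1 p hp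
    simp only [Finset.mem_product, Finset.mem_range]
    omega
  calc S.card ≤ (Finset.range n ×ˢ Finset.range m).card := Finset.card_le_card hsub
    _ = n * m := by simp

lemma Ttot_eq {n m s : ℕ} (hs : 0 < s) : Ttot n m s = (Tile n m s).ncard := by
  classical
  have hfin := tile_finite (n := n) (m := m) hs
  set F := hfin.toFinset with hF
  have hTk : ∀ k, T n m s k = (F.filter (fun S => S.card = k)).card := by
    intro k
    rw [T, ← Set.ncard_coe_finset]
    congr 1
    ext S
    simp only [Finset.coe_filter, Set.mem_setOf_eq, hF, Set.Finite.mem_toFinset]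
    unfold Tile
    simp only [Set.mem_setOf_eq]
    tauto
  have hsum : F.card = ∑ k ∈ Finset.range (n * m + 1), (F.filter (fun S => S.card = k)).card :=
    Finset.card_eq_sum_card_fiberwise (f := Finset.card) (fun S hS =>
      Finset.mem_range.mpr (Nat.lt_succ_of_le (card_le_tile hs (hfin.mem_toFinset.mp hS))))
  rw [Ttot]
  simp_rw [hTk]
  rw [← hsum, hF, Set.ncard_eq_toFinset_card _ hfin]

lemma tile_base {n m s : ℕ} (hm : m < s) : Tile n m s = {∅} := by
  ext S
  simp only [Set.mem_singleton_iff]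
  constructor
  · rintro ⟨hc, _⟩
    rw [Finset.eq_empty_iff_forall_notMem]
    intro p hp
    have := (hc p hp).2
    omega
  · rintro rfl
    exact ⟨by simp, by simp⟩

lemma ncard_prod_set {α β : Type*} (s : Set α) (t : Set β) :
    (s ×ˢ t).ncard = s.ncard * t.ncard := by
  rw [← Nat.card_coe_set_eq, ← Nat.card_coe_set_eq, ← Nat.card_coe_set_eq,
    Nat.card_congr (Equiv.Set.prod s t), Nat.card_prod]

lemma tile_step {n m s : ℕ} (hs : 0 < s) (h1 : s ≤ n) (h2 : n < 2 * s) (hm : s ≤ m) :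
    (Tile n m s).ncard = (Tile n (m - 1) s).ncard + (n - s + 1) * (Tile n (m - s) s).ncard := by
  classical
  set A2 : Set (Finset (ℕ × ℕ)) := {S | S ∈ Tile n m s ∧ ∃ r, (r, m - s) ∈ S} with hA2
  have hsplit : Tile n m s = Tile n (m - 1) s ∪ A2 := by
    ext S
    constructor
    · intro hS
      by_cases hc : ∃ r, (r, m - s) ∈ S
      · exact Or.inr ⟨hS, hc⟩
      · left
        refine ⟨fun p hp => ?_, hS.2⟩
        obtain ⟨a, b⟩ := p
        have h3 := hS.1 (a, b) hp
        have h4 : b ≠ m - s := fun h => hc ⟨a, h ▸ hp⟩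
        simp only at h3 ⊢
        omega
    · rintro (hS | hS)
      · refine ⟨fun p hp => ?_, hS.2⟩
        have h3 := hS.1 p hp
        omega
      · exact hS.1
  have hd : Disjoint (Tile n (m - 1) s) A2 := by
    rw [Set.disjoint_left]
    rintro S hS1 ⟨_, r, hr⟩
    have h3 : (r, m - s).2 + s ≤ m - 1 := (hS1.1 _ hr).2
    simp only at h3
    omega
  have hfin2 : A2.Finite := (tile_finite hs).subset (fun S hS => hS.1)
  rw [hsplit, Set.ncard_union_eq hd ((tile_finite hs).subset (by rw [hsplit]; exact Set.subset_union_left)) hfin2]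
  congr 1
  -- count A2 via bijection
  have hbij : Set.BijOn (fun x : ℕ × Finset (ℕ × ℕ) => insert (x.1, m - s) x.2)
      ((Set.Iio (n - s + 1)) ×ˢ Tile n (m - s) s) A2 := by
    refine ⟨?_, ?_, ?_⟩
    · rintro ⟨r, S⟩ ⟨hr, hS⟩
      simp only [Set.mem_Iio] at hr
      have hmemcond : ∀ p ∈ insert (r, m - s) S, p.1 + s ≤ n ∧ p.2 + s ≤ m := by
        intro p hp
        rcases Finset.mem_insert.mp hp with h | h
        · subst h; exact ⟨by omega, by omega⟩
        · have h3 := hS.1 p h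
          exact ⟨h3.1, by omega⟩
      refine ⟨⟨hmemcond, ?_⟩, ⟨r, Finset.mem_insert_self _ _⟩⟩
      rw [Finset.coe_insert, Set.pairwise_insert]
      refine ⟨hS.2, fun b hb _ => ?_⟩
      have hb2 := hS.1 b hb
      have hdisj : Disjoint (squareCells s (r, m - s)) (squareCells s b) :=
        (disj_iff hs h2 (show r + s ≤ n by omega) hb2.1).mpr
          (Or.inr (show b.2 + s ≤ m - s from hb2.2))
      exact ⟨hdisj, hdisj.symm⟩
    · rintro ⟨r, S⟩ ⟨hr, hS⟩ ⟨r', S'⟩ ⟨hr', hS'⟩ heq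
      simp only at heq
      have hnot : (r, m - s) ∉ S := fun h => by
        have h3 : (r, m - s).2 + s ≤ m - s := (hS.1 _ h).2
        simp only at h3; omega
      have hnot' : (r', m - s) ∉ S' := fun h => by
        have h3 : (r', m - s).2 + s ≤ m - s := (hS'.1 _ h).2
        simp only at h3; omega
      have hmem : (r, m - s) ∈ insert (r', m - s) S' := heq ▸ Finset.mem_insert_self _ _
      rcases Finset.mem_insert.mp hmem with h | h
      · have hrr : r = r' := (Prod.mk.injEq _ _ _ _ ▸ h).1
        subst hrr
        have hSS : S = S' := by
          have h5 := congrArg (fun t => Finset.erase t (r, m - s)) heq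
          simpa [Finset.erase_insert hnot, Finset.erase_insert hnot'] using h5
        rw [hSS]
      · exfalso
        have h3 : (r, m - s).2 + s ≤ m - s := (hS'.1 _ h).2
        simp only at h3; omega
    · intro S hS
      obtain ⟨hS1, r, hr⟩ := hS
      have hrn : r + s ≤ n := (hS1.1 _ hr).1
      refine ⟨(r, S.erase (r, m - s)), ⟨?_, ?_, ?_⟩, ?_⟩
      · show r ∈ Set.Iio (n - s + 1); simp only [Set.mem_Iio]; omega
      · intro p hp
        have hpS := Finset.mem_of_mem_erase hp
        have hpne := Finset.ne_of_mem_erase hp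
        have hd2 : Disjoint (squareCells s p) (squareCells s (r, m - s)) :=
          hS1.2 (Finset.mem_coe.mpr hpS) (Finset.mem_coe.mpr hr) hpne
        rw [disj_iff hs h2 (hS1.1 _ hpS).1 (show (r, m - s).1 + s ≤ n from hrn)] at hd2
        have hd3 : p.2 + s ≤ m - s ∨ (m - s) + s ≤ p.2 := hd2
        have h4 := (hS1.1 _ hpS).2
        exact ⟨(hS1.1 _ hpS).1, by omega⟩
      · exact hS1.2.mono (Finset.coe_subset.mpr (Finset.erase_subset _ _))
      · exact Finset.insert_erase hr
  rw [← hbij.image_eq, Set.ncard_image_of_injOn hbij.injOn, ncard_prod_set]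
  congr 1
  rw [← Finset.coe_Iio, Set.ncard_coe_finset, Nat.card_Iio]

theorem stmt_12 (n s : ℕ) (hs : 0 < s) (h1 : s ≤ n) (h2 : n < 2 * s) :
    (∀ m : ℕ, m < s → Ttot n m s = 1) ∧
    (∀ m : ℕ, s ≤ m →
      Ttot n m s = Ttot n (m - 1) s + (n - s + 1) * Ttot n (m - s) s) := by
  constructor
  · intro m hm
    rw [Ttot_eq hs, tile_base hm, Set.ncard_singleton]
  · intro m hm
    rw [Ttot_eq hs, Ttot_eq hs, Ttot_eq hs, tile_step hs h1 h2 hm]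
end

section
/- For s ≥ 1, the number of ways to place exactly 3 non-overlapping s×s squares in a 2s×2s square is T(2s,2s,s,3) = 4s. -/
def famA (s t : ℕ) : Finset (ℕ × ℕ) := {(0,0),(0,s),(s,t)}
def famB (s t : ℕ) : Finset (ℕ × ℕ) := {(s,0),(s,s),(0,t)}
def famC (s t : ℕ) : Finset (ℕ × ℕ) := {(0,0),(s,0),(t,s)}
def famD (s t : ℕ) : Finset (ℕ × ℕ) := {(0,s),(s,s),(t,0)}

def F (s : ℕ) : Finset (Finset (ℕ × ℕ)) :=
  ((Finset.range (s+1)).image (famA s)) ∪ ((Finset.range (s+1)).image (famB s)) ∪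
  ((Finset.Ico 1 s).image (famC s)) ∪ ((Finset.Ico 1 s).image (famD s))

lemma disjoint_squareCells (s : ℕ) (p q : ℕ × ℕ)
    (h : p.1 + s ≤ q.1 ∨ q.1 + s ≤ p.1 ∨ p.2 + s ≤ q.2 ∨ q.2 + s ≤ p.2) :
    Disjoint (squareCells s p) (squareCells s q) := by
  rw [Finset.disjoint_left]
  intro x hx hx'
  simp [squareCells, Finset.mem_product] at hx hx'
  omega

lemma D_of_disjoint (s : ℕ) (hs : 1 ≤ s) (p q : ℕ × ℕ)
    (hp1 : p.1 ≤ s) (hp2 : p.2 ≤ s) (hq1 : q.1 ≤ s) (hq2 : q.2 ≤ s)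
    (h : Disjoint (squareCells s p) (squareCells s q)) :
    (p.1 = 0 ∧ q.1 = s) ∨ (p.1 = s ∧ q.1 = 0) ∨ (p.2 = 0 ∧ q.2 = s) ∨ (p.2 = s ∧ q.2 = 0) := by
  by_contra hc
  have h1 : (max p.1 q.1, max p.2 q.2) ∈ squareCells s p := by
    simp only [squareCells, Finset.mem_product, Finset.mem_Ico]
    omega
  have h2 : (max p.1 q.1, max p.2 q.2) ∈ squareCells s q := by
    simp only [squareCells, Finset.mem_product, Finset.mem_Ico]
    omega
  exact absurd h2 (Finset.disjoint_left.1 h h1)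

lemma mem_F_A (s t : ℕ) (ht : t ≤ s) : famA s t ∈ F s := by
  simp only [F, Finset.mem_union, Finset.mem_image]
  refine Or.inl (Or.inl (Or.inl ⟨t, ?_, rfl⟩))
  simp only [Finset.mem_range]; omega

lemma mem_F_B (s t : ℕ) (ht : t ≤ s) : famB s t ∈ F s := by
  simp only [F, Finset.mem_union, Finset.mem_image]
  refine Or.inl (Or.inl (Or.inr ⟨t, ?_, rfl⟩))
  simp only [Finset.mem_range]; omega

lemma mem_F_C (s t : ℕ) (hs : 1 ≤ s) (ht : t ≤ s) : famC s t ∈ F s := by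
  rcases Nat.lt_or_ge t 1 with h | h
  · have ht0 : t = 0 := by omega
    have he : famC s t = famA s 0 := by
      ext ⟨x, y⟩; simp [famA, famC, Prod.ext_iff]; omega
    rw [he]; exact mem_F_A s 0 (by omega)
  · rcases Nat.lt_or_ge t s with h' | h'
    · simp only [F, Finset.mem_union, Finset.mem_image]
      refine Or.inl (Or.inr ⟨t, ?_, rfl⟩)
      simp only [Finset.mem_Ico]; omega
    · have hts : t = s := by omega
      have he : famC s t = famB s 0 := by
        ext ⟨x, y⟩; simp [famB, famC, Prod.ext_iff]; omega
      rw [he]; exact mem_F_B s 0 (by omega)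

lemma mem_F_D (s t : ℕ) (hs : 1 ≤ s) (ht : t ≤ s) : famD s t ∈ F s := by
  rcases Nat.lt_or_ge t 1 with h | h
  · have ht0 : t = 0 := by omega
    have he : famD s t = famA s s := by
      ext ⟨x, y⟩; simp [famA, famD, Prod.ext_iff]; omega
    rw [he]; exact mem_F_A s s (by omega)
  · rcases Nat.lt_or_ge t s with h' | h'
    · simp only [F, Finset.mem_union, Finset.mem_image]
      refine Or.inr ⟨t, ?_, rfl⟩
      simp only [Finset.mem_Ico]; omega
    · have hts : t = s := by omega
      have he : famD s t = famB s s := by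
        ext ⟨x, y⟩; simp [famB, famD, Prod.ext_iff]; omega
      rw [he]; exact mem_F_B s s (by omega)

lemma memF_A (s t : ℕ) (ht : t ≤ s) {S : Finset (ℕ × ℕ)} (h : S = famA s t) : S ∈ F s :=
  h ▸ mem_F_A s t ht
lemma memF_B (s t : ℕ) (ht : t ≤ s) {S : Finset (ℕ × ℕ)} (h : S = famB s t) : S ∈ F s :=
  h ▸ mem_F_B s t ht
lemma memF_C (s t : ℕ) (hs : 1 ≤ s) (ht : t ≤ s) {S : Finset (ℕ × ℕ)} (h : S = famC s t) :
    S ∈ F s := h ▸ mem_F_C s t hs ht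
lemma memF_D (s t : ℕ) (hs : 1 ≤ s) (ht : t ≤ s) {S : Finset (ℕ × ℕ)} (h : S = famD s t) :
    S ∈ F s := h ▸ mem_F_D s t hs ht

lemma sol_famA (s t : ℕ) (hs : 1 ≤ s) (ht : t ≤ s) :
    (famA s t).card = 3 ∧ (∀ p ∈ famA s t, p.1 + s ≤ 2*s ∧ p.2 + s ≤ 2*s) ∧
      ((famA s t : Set (ℕ × ℕ)).Pairwise fun p q => Disjoint (squareCells s p) (squareCells s q)) := by
  refine ⟨?_, ?_, ?_⟩
  · rw [famA, Finset.card_insert_of_notMem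
        (by simp only [Finset.mem_insert, Finset.mem_singleton, Prod.mk.injEq]; omega),
      Finset.card_insert_of_notMem
        (by simp only [Finset.mem_singleton, Prod.mk.injEq]; omega),
      Finset.card_singleton]
  · intro p hp
    simp only [famA, Finset.mem_insert, Finset.mem_singleton, Prod.ext_iff] at hp
    omega
  · intro p hp q hq hne
    simp only [famA, Finset.coe_insert, Set.mem_insert_iff, Finset.coe_singleton,
      Set.mem_singleton_iff, Prod.ext_iff] at hp hq
    have hne' : ¬(p.1 = q.1 ∧ p.2 = q.2) := fun h => hne (Prod.ext h.1 h.2)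
    apply disjoint_squareCells
    omega

lemma sol_famB (s t : ℕ) (hs : 1 ≤ s) (ht : t ≤ s) :
    (famB s t).card = 3 ∧ (∀ p ∈ famB s t, p.1 + s ≤ 2*s ∧ p.2 + s ≤ 2*s) ∧
      ((famB s t : Set (ℕ × ℕ)).Pairwise fun p q => Disjoint (squareCells s p) (squareCells s q)) := by
  refine ⟨?_, ?_, ?_⟩
  · rw [famB, Finset.card_insert_of_notMem
        (by simp only [Finset.mem_insert, Finset.mem_singleton, Prod.mk.injEq]; omega),
      Finset.card_insert_of_notMem
        (by simp only [Finset.mem_singleton, Prod.mk.injEq]; omega),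
      Finset.card_singleton]
  · intro p hp
    simp only [famB, Finset.mem_insert, Finset.mem_singleton, Prod.ext_iff] at hp
    omega
  · intro p hp q hq hne
    simp only [famB, Finset.coe_insert, Set.mem_insert_iff, Finset.coe_singleton,
      Set.mem_singleton_iff, Prod.ext_iff] at hp hq
    have hne' : ¬(p.1 = q.1 ∧ p.2 = q.2) := fun h => hne (Prod.ext h.1 h.2)
    apply disjoint_squareCells
    omega

lemma sol_famC (s t : ℕ) (hs : 1 ≤ s) (ht : t ≤ s) :
    (famC s t).card = 3 ∧ (∀ p ∈ famC s t, p.1 + s ≤ 2*s ∧ p.2 + s ≤ 2*s) ∧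
      ((famC s t : Set (ℕ × ℕ)).Pairwise fun p q => Disjoint (squareCells s p) (squareCells s q)) := by
  refine ⟨?_, ?_, ?_⟩
  · rw [famC, Finset.card_insert_of_notMem
        (by simp only [Finset.mem_insert, Finset.mem_singleton, Prod.mk.injEq]; omega),
      Finset.card_insert_of_notMem
        (by simp only [Finset.mem_singleton, Prod.mk.injEq]; omega),
      Finset.card_singleton]
  · intro p hp
    simp only [famC, Finset.mem_insert, Finset.mem_singleton, Prod.ext_iff] at hp
    omega
  · intro p hp q hq hne
    simp only [famC, Finset.coe_insert, Set.mem_insert_iff, Finset.coe_singleton,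
      Set.mem_singleton_iff, Prod.ext_iff] at hp hq
    have hne' : ¬(p.1 = q.1 ∧ p.2 = q.2) := fun h => hne (Prod.ext h.1 h.2)
    apply disjoint_squareCells
    omega

lemma sol_famD (s t : ℕ) (hs : 1 ≤ s) (ht : t ≤ s) :
    (famD s t).card = 3 ∧ (∀ p ∈ famD s t, p.1 + s ≤ 2*s ∧ p.2 + s ≤ 2*s) ∧
      ((famD s t : Set (ℕ × ℕ)).Pairwise fun p q => Disjoint (squareCells s p) (squareCells s q)) := by
  refine ⟨?_, ?_, ?_⟩
  · rw [famD, Finset.card_insert_of_notMem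
        (by simp only [Finset.mem_insert, Finset.mem_singleton, Prod.mk.injEq]; omega),
      Finset.card_insert_of_notMem
        (by simp only [Finset.mem_singleton, Prod.mk.injEq]; omega),
      Finset.card_singleton]
  · intro p hp
    simp only [famD, Finset.mem_insert, Finset.mem_singleton, Prod.ext_iff] at hp
    omega
  · intro p hp q hq hne
    simp only [famD, Finset.coe_insert, Set.mem_insert_iff, Finset.coe_singleton,
      Set.mem_singleton_iff, Prod.ext_iff] at hp hq
    have hne' : ¬(p.1 = q.1 ∧ p.2 = q.2) := fun h => hne (Prod.ext h.1 h.2)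
    apply disjoint_squareCells
    omega

set_option maxHeartbeats 2000000 in

lemma forward (s : ℕ) (hs : 1 ≤ s) (S : Finset (ℕ × ℕ)) (hcard : S.card = 3)
    (hbound : ∀ p ∈ S, p.1 + s ≤ 2 * s ∧ p.2 + s ≤ 2 * s)
    (hpw : (S : Set (ℕ × ℕ)).Pairwise fun p q => Disjoint (squareCells s p) (squareCells s q)) :
    S ∈ F s := by
  obtain ⟨p, q, r, hpq, hpr, hqr, rfl⟩ := Finset.card_eq_three.1 hcard
  obtain ⟨a1, b1⟩ := p
  obtain ⟨a2, b2⟩ := q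
  obtain ⟨a3, b3⟩ := r
  have hb1 := hbound (a1, b1) (by simp)
  have hb2 := hbound (a2, b2) (by simp)
  have hb3 := hbound (a3, b3) (by simp)
  simp only at hb1 hb2 hb3
  have d12 := D_of_disjoint s hs _ _ (by omega) (by omega) (by omega) (by omega)
    (hpw (by simp) (by simp) hpq)
  have d13 := D_of_disjoint s hs _ _ (by omega) (by omega) (by omega) (by omega)
    (hpw (by simp) (by simp) hpr)
  have d23 := D_of_disjoint s hs _ _ (by omega) (by omega) (by omega) (by omega)
    (hpw (by simp) (by simp) hqr)
  simp only at d12 d13 d23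
  rcases d12 with (⟨e1, e2⟩ | ⟨e1, e2⟩ | ⟨e1, e2⟩ | ⟨e1, e2⟩) <;>
    rcases d13 with (⟨e3, e4⟩ | ⟨e3, e4⟩ | ⟨e3, e4⟩ | ⟨e3, e4⟩) <;>
    rcases d23 with (⟨e5, e6⟩ | ⟨e5, e6⟩ | ⟨e5, e6⟩ | ⟨e5, e6⟩)
  · omega
  · omega
  · exact memF_B s b1 (by omega) (by ext ⟨x, y⟩; simp [famB, Prod.ext_iff]; omega)
  · exact memF_B s b1 (by omega) (by ext ⟨x, y⟩; simp [famB, Prod.ext_iff]; omega)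
  · omega
  · omega
  · omega
  · omega
  · omega
  · exact memF_A s b2 (by omega) (by ext ⟨x, y⟩; simp [famA, Prod.ext_iff]; omega)
  · exact memF_C s a3 hs (by omega) (by ext ⟨x, y⟩; simp [famC, Prod.ext_iff]; omega)
  · omega
  · omega
  · exact memF_A s b2 (by omega) (by ext ⟨x, y⟩; simp [famA, Prod.ext_iff]; omega)
  · omega
  · exact memF_D s a3 hs (by omega) (by ext ⟨x, y⟩; simp [famD, Prod.ext_iff]; omega)
  · omega
  · omega
  · omega
  · omega
  · omega
  · omega
  · exact memF_A s b1 (by omega) (by ext ⟨x, y⟩; simp [famA, Prod.ext_iff]; omega)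
  · exact memF_A s b1 (by omega) (by ext ⟨x, y⟩; simp [famA, Prod.ext_iff]; omega)
  · exact memF_B s b2 (by omega) (by ext ⟨x, y⟩; simp [famB, Prod.ext_iff]; omega)
  · omega
  · exact memF_C s a3 hs (by omega) (by ext ⟨x, y⟩; simp [famC, Prod.ext_iff]; omega)
  · omega
  · exact memF_B s b2 (by omega) (by ext ⟨x, y⟩; simp [famB, Prod.ext_iff]; omega)
  · omega
  · omega
  · exact memF_D s a3 hs (by omega) (by ext ⟨x, y⟩; simp [famD, Prod.ext_iff]; omega)
  · exact memF_A s b3 (by omega) (by ext ⟨x, y⟩; simp [famA, Prod.ext_iff]; omega)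
  · omega
  · omega
  · exact memF_C s a2 hs (by omega) (by ext ⟨x, y⟩; simp [famC, Prod.ext_iff]; omega)
  · omega
  · exact memF_B s b3 (by omega) (by ext ⟨x, y⟩; simp [famB, Prod.ext_iff]; omega)
  · omega
  · exact memF_C s a2 hs (by omega) (by ext ⟨x, y⟩; simp [famC, Prod.ext_iff]; omega)
  · exact memF_D s a1 hs (by omega) (by ext ⟨x, y⟩; simp [famD, Prod.ext_iff]; omega)
  · exact memF_D s a1 hs (by omega) (by ext ⟨x, y⟩; simp [famD, Prod.ext_iff]; omega)
  · omega
  · omega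
  · omega
  · omega
  · omega
  · omega
  · exact memF_A s b3 (by omega) (by ext ⟨x, y⟩; simp [famA, Prod.ext_iff]; omega)
  · omega
  · exact memF_D s a2 hs (by omega) (by ext ⟨x, y⟩; simp [famD, Prod.ext_iff]; omega)
  · omega
  · omega
  · exact memF_B s b3 (by omega) (by ext ⟨x, y⟩; simp [famB, Prod.ext_iff]; omega)
  · exact memF_D s a2 hs (by omega) (by ext ⟨x, y⟩; simp [famD, Prod.ext_iff]; omega)
  · omega
  · omega
  · omega
  · omega
  · omega
  · exact memF_C s a1 hs (by omega) (by ext ⟨x, y⟩; simp [famC, Prod.ext_iff]; omega)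
  · exact memF_C s a1 hs (by omega) (by ext ⟨x, y⟩; simp [famC, Prod.ext_iff]; omega)
  · omega
  · omega

lemma card_imA (s : ℕ) (hs : 1 ≤ s) : ((Finset.range (s+1)).image (famA s)).card = s + 1 := by
  rw [Finset.card_image_of_injOn, Finset.card_range]
  intro t1 _ t2 _ h
  have e := Finset.ext_iff.1 h (s, t1)
  simp [famA, Prod.ext_iff] at e
  omega

lemma card_imB (s : ℕ) (hs : 1 ≤ s) : ((Finset.range (s+1)).image (famB s)).card = s + 1 := by
  rw [Finset.card_image_of_injOn, Finset.card_range]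
  intro t1 _ t2 _ h
  have e := Finset.ext_iff.1 h (0, t1)
  simp [famB, Prod.ext_iff] at e
  omega

lemma card_imC (s : ℕ) (hs : 1 ≤ s) : ((Finset.Ico 1 s).image (famC s)).card = s - 1 := by
  rw [Finset.card_image_of_injOn, Nat.card_Ico]
  intro t1 _ t2 _ h
  have e := Finset.ext_iff.1 h (t1, s)
  simp [famC, Prod.ext_iff] at e
  omega

lemma card_imD (s : ℕ) (hs : 1 ≤ s) : ((Finset.Ico 1 s).image (famD s)).card = s - 1 := by
  rw [Finset.card_image_of_injOn, Nat.card_Ico]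
  intro t1 _ t2 _ h
  have e := Finset.ext_iff.1 h (t1, 0)
  simp [famD, Prod.ext_iff] at e
  omega

lemma disj_AB (s : ℕ) (hs : 1 ≤ s) :
    Disjoint ((Finset.range (s+1)).image (famA s)) ((Finset.range (s+1)).image (famB s)) := by
  rw [Finset.disjoint_left]
  rintro S hS1 hS2
  simp only [Finset.mem_image, Finset.mem_range, Finset.mem_Ico] at hS1 hS2
  obtain ⟨t1, ht1, rfl⟩ := hS1
  obtain ⟨t2, ht2, h⟩ := hS2
  have e1 := Finset.ext_iff.1 h (0, 0)
  have e2 := Finset.ext_iff.1 h (0, s)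
  have e3 := Finset.ext_iff.1 h (s, 0)
  have e4 := Finset.ext_iff.1 h (s, s)
  simp [famA, famB, Prod.ext_iff] at e1 e2 e3 e4
  omega

lemma disj_AC (s : ℕ) (hs : 1 ≤ s) :
    Disjoint ((Finset.range (s+1)).image (famA s)) ((Finset.Ico 1 s).image (famC s)) := by
  rw [Finset.disjoint_left]
  rintro S hS1 hS2
  simp only [Finset.mem_image, Finset.mem_range, Finset.mem_Ico] at hS1 hS2
  obtain ⟨t1, ht1, rfl⟩ := hS1
  obtain ⟨t2, ht2, h⟩ := hS2
  have e1 := Finset.ext_iff.1 h (0, 0)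
  have e2 := Finset.ext_iff.1 h (0, s)
  have e3 := Finset.ext_iff.1 h (s, 0)
  have e4 := Finset.ext_iff.1 h (s, s)
  simp [famA, famC, Prod.ext_iff] at e1 e2 e3 e4
  omega

lemma disj_AD (s : ℕ) (hs : 1 ≤ s) :
    Disjoint ((Finset.range (s+1)).image (famA s)) ((Finset.Ico 1 s).image (famD s)) := by
  rw [Finset.disjoint_left]
  rintro S hS1 hS2
  simp only [Finset.mem_image, Finset.mem_range, Finset.mem_Ico] at hS1 hS2
  obtain ⟨t1, ht1, rfl⟩ := hS1
  obtain ⟨t2, ht2, h⟩ := hS2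
  have e1 := Finset.ext_iff.1 h (0, 0)
  have e2 := Finset.ext_iff.1 h (0, s)
  have e3 := Finset.ext_iff.1 h (s, 0)
  have e4 := Finset.ext_iff.1 h (s, s)
  simp [famA, famD, Prod.ext_iff] at e1 e2 e3 e4
  omega

lemma disj_BC (s : ℕ) (hs : 1 ≤ s) :
    Disjoint ((Finset.range (s+1)).image (famB s)) ((Finset.Ico 1 s).image (famC s)) := by
  rw [Finset.disjoint_left]
  rintro S hS1 hS2
  simp only [Finset.mem_image, Finset.mem_range, Finset.mem_Ico] at hS1 hS2
  obtain ⟨t1, ht1, rfl⟩ := hS1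
  obtain ⟨t2, ht2, h⟩ := hS2
  have e1 := Finset.ext_iff.1 h (0, 0)
  have e2 := Finset.ext_iff.1 h (0, s)
  have e3 := Finset.ext_iff.1 h (s, 0)
  have e4 := Finset.ext_iff.1 h (s, s)
  simp [famB, famC, Prod.ext_iff] at e1 e2 e3 e4
  omega

lemma disj_BD (s : ℕ) (hs : 1 ≤ s) :
    Disjoint ((Finset.range (s+1)).image (famB s)) ((Finset.Ico 1 s).image (famD s)) := by
  rw [Finset.disjoint_left]
  rintro S hS1 hS2
  simp only [Finset.mem_image, Finset.mem_range, Finset.mem_Ico] at hS1 hS2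
  obtain ⟨t1, ht1, rfl⟩ := hS1
  obtain ⟨t2, ht2, h⟩ := hS2
  have e1 := Finset.ext_iff.1 h (0, 0)
  have e2 := Finset.ext_iff.1 h (0, s)
  have e3 := Finset.ext_iff.1 h (s, 0)
  have e4 := Finset.ext_iff.1 h (s, s)
  simp [famB, famD, Prod.ext_iff] at e1 e2 e3 e4
  omega

lemma disj_CD (s : ℕ) (hs : 1 ≤ s) :
    Disjoint ((Finset.Ico 1 s).image (famC s)) ((Finset.Ico 1 s).image (famD s)) := by
  rw [Finset.disjoint_left]
  rintro S hS1 hS2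
  simp only [Finset.mem_image, Finset.mem_range, Finset.mem_Ico] at hS1 hS2
  obtain ⟨t1, ht1, rfl⟩ := hS1
  obtain ⟨t2, ht2, h⟩ := hS2
  have e1 := Finset.ext_iff.1 h (0, 0)
  have e2 := Finset.ext_iff.1 h (0, s)
  have e3 := Finset.ext_iff.1 h (s, 0)
  have e4 := Finset.ext_iff.1 h (s, s)
  simp [famC, famD, Prod.ext_iff] at e1 e2 e3 e4
  omega

lemma card_F (s : ℕ) (hs : 1 ≤ s) : (F s).card = 4 * s := by
  rw [F, Finset.card_union_of_disjoint, Finset.card_union_of_disjoint,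
    Finset.card_union_of_disjoint (disj_AB s hs), card_imA s hs, card_imB s hs,
    card_imC s hs, card_imD s hs]
  · omega
  · rw [Finset.disjoint_union_left]
    exact ⟨disj_AC s hs, disj_BC s hs⟩
  · rw [Finset.disjoint_union_left, Finset.disjoint_union_left]
    exact ⟨⟨disj_AD s hs, disj_BD s hs⟩, disj_CD s hs⟩

theorem stmt_15 (s : ℕ) (hs : 1 ≤ s) :
    T (2 * s) (2 * s) s 3 = 4 * s := by
  have hset : {S : Finset (ℕ × ℕ) |
      S.card = 3 ∧
      (∀ p ∈ S, p.1 + s ≤ 2 * s ∧ p.2 + s ≤ 2 * s) ∧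
      (S : Set (ℕ × ℕ)).Pairwise fun p q => Disjoint (squareCells s p) (squareCells s q)}
      = ↑(F s) := by
    ext S
    simp only [Set.mem_setOf_eq, Finset.mem_coe]
    constructor
    · rintro ⟨h1, h2, h3⟩
      exact forward s hs S h1 h2 h3
    · intro hS
      simp only [F, Finset.mem_union, Finset.mem_image, Finset.mem_range,
        Finset.mem_Ico] at hS
      rcases hS with ((⟨t, ht, rfl⟩ | ⟨t, ht, rfl⟩) | ⟨t, ht, rfl⟩) | ⟨t, ht, rfl⟩
      · exact sol_famA s t hs (by omega)
      · exact sol_famB s t hs (by omega)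
      · exact sol_famC s t hs (by omega)
      · exact sol_famD s t hs (by omega)
  unfold T
  rw [hset, Set.ncard_coe_finset, card_F s hs]
end
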